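/- (Cut-slice correspondence.) Let (Q,C) be a truncated quiver such that Q is connected. Then the assignment S ↦ C_S := Q₁ \ π(S₁) induces a bijection from the set of slices of ℤ(Q,C) modulo the action of τ (identifying a slice S with τ^ℓ S for all ℓ ∈ ℤ) to the set {C' ⊆ Q₁ : C' is compatible with C}. Moreover, for every slice S, the covering morphism π induces an isomorphism of quivers from S to Q_{C_S}. -/

import Mathlib

/-!
A slice `S` is the graph of a level function `f : Q₀ → ℤ`, and the slice condition says that
`g_C(a) + f(t a) - f(s a) ∈ {0, 1}` for every arrow `a`; this number is exactly `g_{C_S}(a)`.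
Hence `g_{C_S} - g_C` is the coboundary of `f`, so `C_S` is compatible with `C`. Conversely, on a
connected quiver `C'` is compatible with `C` exactly when `g_{C'} - g_C` is the coboundary of some
`f` (integrate along walks from a base point); the graph of `f` is then a slice with cut `C'`, and
`f` is unique up to an additive constant, i.e. the slice is unique up to a power of `τ`.
-/

/-- A quiver given by a (finite) set of vertices `V`, a set of arrows `A`,
and source/target maps `s`, `t`. -/
structure PreQuiver where
  V : Type
  A : Type
  s : A → V
  t : A → V

namespace PreQuiver

variable (Q : PreQuiver)

/-- A step of a walk: an arrow of the double quiver, i.e. an arrow of `Q`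
together with an orientation (`true` = the arrow itself, `false` = its formal inverse). -/
abbrev Step := Q.A × Bool

/-- The source of a step in the double quiver. -/
def stepSrc (e : Q.Step) : Q.V := if e.2 then Q.s e.1 else Q.t e.1

/-- The target of a step in the double quiver. -/
def stepTgt (e : Q.Step) : Q.V := if e.2 then Q.t e.1 else Q.s e.1

/-- `Q.IsWalk x y l` : the list of steps `l` is a walk from `x` to `y`
(i.e. a path in the double quiver). -/
def IsWalk : Q.V → Q.V → List Q.Step → Prop
  | x, y, [] => x = y
  | x, y, e :: l => Q.stepSrc e = x ∧ IsWalk (Q.stepTgt e) y l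

/-- `Q.IsPath x y l` : the list of arrows `l` is a path of arrows from `x` to `y`. -/
def IsPath : Q.V → Q.V → List Q.A → Prop
  | x, y, [] => x = y
  | x, y, a :: l => Q.s a = x ∧ IsPath (Q.t a) y l

/-- The degree `g_C(a)` of an arrow: `1` if `a ∈ C` and `0` otherwise. -/
noncomputable def gA (C : Set Q.A) (a : Q.A) : ℤ :=
  haveI := Classical.propDecidable (a ∈ C)
  if a ∈ C then 1 else 0

/-- The degree of a step: `g_C(a)` for `a` and `-g_C(a)` for `a⁻¹`. -/
noncomputable def gStep (C : Set Q.A) (e : Q.Step) : ℤ :=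
  if e.2 then Q.gA C e.1 else -Q.gA C e.1

/-- The degree `g_C(p)` of a walk, extended additively. -/
noncomputable def gWalk (C : Set Q.A) (l : List Q.Step) : ℤ := (l.map (Q.gStep C)).sum

/-- The degree `g_C(p)` of a path of arrows. -/
noncomputable def gPath (C : Set Q.A) (l : List Q.A) : ℤ := (l.map (Q.gA C)).sum

/-- Two sets of arrows are compatible if they give every cyclic walk the same degree. -/
def Compatible (C C' : Set Q.A) : Prop :=
  ∀ (x : Q.V) (l : List Q.Step), Q.IsWalk x x l → Q.gWalk C l = Q.gWalk C' l

/-- A quiver is connected if any two vertices are joined by a walk. -/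
def Connected : Prop := ∀ x y : Q.V, ∃ l : List Q.Step, Q.IsWalk x y l

/-- The covering quiver `ℤ(Q,C)`: vertices `Q₀ × ℤ`; for an arrow `a : x → y` and `ℓ ∈ ℤ`,
an arrow `(a,ℓ) : (x,ℓ) → (y,ℓ)` if `a ∉ C` and `(a,ℓ) : (x,ℓ) → (y,ℓ-1)` if `a ∈ C`. -/
noncomputable def cover (C : Set Q.A) : PreQuiver where
  V := Q.V × ℤ
  A := Q.A × ℤ
  s := fun e => (Q.s e.1, e.2)
  t := fun e => (Q.t e.1, e.2 - Q.gA C e.1)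

end PreQuiver

namespace PreQuiver

variable (Q : PreQuiver)

/-- The arrows of the full subquiver of `ℤ(Q,C)` on a set `S` of vertices:
those arrows with both endpoints in `S`. -/
noncomputable def sliceArrows (C : Set Q.A) (S : Set (Q.V × ℤ)) : Set (Q.A × ℤ) :=
  {e : Q.A × ℤ | (Q.cover C).s e ∈ S ∧ (Q.cover C).t e ∈ S}

/-- `S` determines a slice of `ℤ(Q,C)`: every `τ`-orbit of vertices meets `S` exactly once, and
for every arrow of `ℤ(Q,C)` starting in `S` the target lies in `S ∪ τ⁻¹S`. -/
noncomputable def IsSlice (C : Set Q.A) (S : Set (Q.V × ℤ)) : Prop :=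
  (∀ x : Q.V, ∃! ℓ : ℤ, (x, ℓ) ∈ S) ∧
  ∀ e : Q.A × ℤ, (Q.cover C).s e ∈ S →
    ((Q.cover C).t e ∈ S ∨ (((Q.cover C).t e).1, ((Q.cover C).t e).2 + 1) ∈ S)

/-- The cut `C_S := Q₁ \ π(S₁)` associated with a slice `S`. -/
noncomputable def cutOf (C : Set Q.A) (S : Set (Q.V × ℤ)) : Set Q.A :=
  {a : Q.A | a ∉ (fun e : Q.A × ℤ => e.1) '' Q.sliceArrows C S}

end PreQuiver

namespace PreQuiver

variable {Q : PreQuiver} {C C' : Set Q.A} {f f' : Q.V → ℤ}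

lemma gA_of_mem {a : Q.A} (h : a ∈ C) : Q.gA C a = 1 := by simp [gA, h]

lemma gA_of_notMem {a : Q.A} (h : a ∉ C) : Q.gA C a = 0 := by simp [gA, h]

lemma gA_nonneg (C : Set Q.A) (a : Q.A) : 0 ≤ Q.gA C a := by
  unfold gA; split <;> omega

lemma gA_le_one (C : Set Q.A) (a : Q.A) : Q.gA C a ≤ 1 := by
  unfold gA; split <;> omega

lemma gA_injective : Function.Injective Q.gA := by
  intro C C' h
  ext a
  have := congrFun h a
  by_cases ha : a ∈ C <;> by_cases ha' : a ∈ C' <;> simp_all [gA]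

lemma IsWalk.append {x y z : Q.V} {l₁ l₂ : List Q.Step}
    (h₁ : Q.IsWalk x y l₁) (h₂ : Q.IsWalk y z l₂) : Q.IsWalk x z (l₁ ++ l₂) := by
  induction l₁ generalizing x with
  | nil => obtain rfl : x = y := h₁; exact h₂
  | cons e l ih => exact ⟨h₁.1, ih h₁.2⟩

lemma gWalk_cons (C : Set Q.A) (e : Q.Step) (l : List Q.Step) :
    Q.gWalk C (e :: l) = Q.gStep C e + Q.gWalk C l := by
  simp [gWalk]

lemma gWalk_append (C : Set Q.A) (l₁ l₂ : List Q.Step) :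
    Q.gWalk C (l₁ ++ l₂) = Q.gWalk C l₁ + Q.gWalk C l₂ := by
  simp [gWalk]

variable (Q) in
def IsPotential (C C' : Set Q.A) (f : Q.V → ℤ) : Prop :=
  ∀ a, Q.gA C' a = Q.gA C a + f (Q.t a) - f (Q.s a)

lemma IsPotential.gStep_eq (h : Q.IsPotential C C' f) (e : Q.Step) :
    Q.gStep C' e = Q.gStep C e + f (Q.stepTgt e) - f (Q.stepSrc e) := by
  obtain ⟨a, _ | _⟩ := e
  · simp only [gStep, stepSrc, stepTgt, h a, Bool.false_eq_true, if_false]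
    ring
  · exact h a

lemma IsPotential.gWalk_eq (h : Q.IsPotential C C' f) {x y : Q.V} {l : List Q.Step}
    (hl : Q.IsWalk x y l) : Q.gWalk C' l = Q.gWalk C l + f y - f x := by
  induction l generalizing x with
  | nil => obtain rfl : x = y := hl; simp [gWalk]
  | cons e l ih =>
    obtain ⟨rfl, hl⟩ := hl
    rw [gWalk_cons, gWalk_cons, h.gStep_eq, ih hl]
    ring

lemma IsPotential.compatible (h : Q.IsPotential C C' f) : Q.Compatible C C' := fun _ _ hl => by
  simpa using (h.gWalk_eq hl).symm

lemma Compatible.exists_isPotential (hconn : Q.Connected) (h : Q.Compatible C C') :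
    ∃ f, Q.IsPotential C C' f := by
  rcases isEmpty_or_nonempty Q.V with hV | ⟨⟨x₀⟩⟩
  · exact ⟨isEmptyElim, fun a => isEmptyElim (Q.s a)⟩
  choose p hp using hconn x₀
  refine ⟨fun y => Q.gWalk C' (p y) - Q.gWalk C (p y), fun a => ?_⟩
  obtain ⟨q, hq⟩ := hconn (Q.t a) x₀
  have ha : Q.IsWalk (Q.s a) (Q.t a) [(a, true)] := ⟨rfl, rfl⟩
  -- compare the cycles `p (s a), a, q` and `p (t a), q` based at `x₀`
  have h₁ := h x₀ _ ((hp (Q.s a)).append (ha.append hq))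
  have h₂ := h x₀ _ ((hp (Q.t a)).append hq)
  simp only [gWalk_append, List.singleton_append, gWalk_cons, gStep, if_true] at h₁ h₂
  linarith

lemma Connected.exists_eq_add_const (hconn : Q.Connected) (hf : Q.IsPotential C C' f)
    (hf' : Q.IsPotential C C' f') : ∃ c, ∀ x, f' x = f x + c := by
  rcases isEmpty_or_nonempty Q.V with hV | ⟨⟨x₀⟩⟩
  · exact ⟨0, isEmptyElim⟩
  refine ⟨f' x₀ - f x₀, fun x => ?_⟩
  obtain ⟨l, hl⟩ := hconn x₀ x
  have := (hf.gWalk_eq hl).symm.trans (hf'.gWalk_eq hl)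
  linarith

variable (Q) in
def graph (f : Q.V → ℤ) : Set (Q.V × ℤ) := {v | v.2 = f v.1}

@[simp]
lemma mem_graph {x : Q.V} {m : ℤ} : (x, m) ∈ Q.graph f ↔ m = f x := Iff.rfl

lemma mem_image_shift {S : Set (Q.V × ℤ)} {ℓ : ℤ} {x : Q.V} {m : ℤ} :
    (x, m) ∈ (fun v : Q.V × ℤ => (v.1, v.2 + ℓ)) '' S ↔ (x, m - ℓ) ∈ S := by
  refine ⟨?_, fun h => ⟨(x, m - ℓ), h, by simp⟩⟩
  rintro ⟨⟨y, k⟩, hk, hv⟩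
  simp only [Prod.mk.injEq] at hv
  obtain ⟨rfl, rfl⟩ := hv
  simpa using hk

lemma image_shift_graph (f : Q.V → ℤ) (ℓ : ℤ) :
    (fun v : Q.V × ℤ => (v.1, v.2 + ℓ)) '' Q.graph f = Q.graph (fun x => f x + ℓ) := by
  ext ⟨x, m⟩
  simp only [mem_image_shift, mem_graph]
  omega

lemma cutOf_image_shift (S : Set (Q.V × ℤ)) (ℓ : ℤ) :
    Q.cutOf C ((fun v : Q.V × ℤ => (v.1, v.2 + ℓ)) '' S) = Q.cutOf C S := by
  ext a
  simp only [cutOf, sliceArrows, cover, mem_image_shift]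
  simp only [Set.mem_image, Set.mem_ofPred_eq, Prod.exists, exists_and_right, exists_eq_right]
  refine not_congr ⟨fun ⟨m, h⟩ => ⟨m - ℓ, ?_⟩, fun ⟨m, h⟩ => ⟨m + ℓ, ?_⟩⟩
  · simpa only [sub_right_comm _ ℓ] using h
  · simpa only [sub_right_comm _ _ ℓ, add_sub_cancel_right] using h

lemma IsSlice.exists_eq_graph {S : Set (Q.V × ℤ)} (hS : Q.IsSlice C S) :
    ∃ f, S = Q.graph f := by
  choose f hf hf_unique using hS.1
  exact ⟨f, Set.ext fun ⟨x, m⟩ => ⟨hf_unique x m, fun hm => (mem_graph.1 hm) ▸ hf x⟩⟩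

lemma isSlice_graph_iff :
    Q.IsSlice C (Q.graph f) ↔
      ∀ a, 0 ≤ Q.gA C a + f (Q.t a) - f (Q.s a) ∧ Q.gA C a + f (Q.t a) - f (Q.s a) ≤ 1 := by
  simp only [IsSlice, cover, mem_graph, existsUnique_eq, implies_true, true_and,
    Prod.forall]
  refine ⟨fun h a => ?_, fun h a ℓ hℓ => ?_⟩
  · have := h a _ rfl
    omega
  · have := h a
    omega

lemma mem_cutOf_graph {a : Q.A} :
    a ∈ Q.cutOf C (Q.graph f) ↔ f (Q.t a) ≠ f (Q.s a) - Q.gA C a := by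
  simp [cutOf, sliceArrows, cover, eq_comm]

lemma IsSlice.isPotential_cutOf_graph (h : Q.IsSlice C (Q.graph f)) :
    Q.IsPotential C (Q.cutOf C (Q.graph f)) f := by
  intro a
  have := isSlice_graph_iff.1 h a
  by_cases ha : a ∈ Q.cutOf C (Q.graph f)
  · rw [gA_of_mem ha]
    rw [mem_cutOf_graph] at ha
    omega
  · rw [gA_of_notMem ha]
    rw [mem_cutOf_graph, not_not] at ha
    omega

lemma IsPotential.isSlice_graph (h : Q.IsPotential C C' f) : Q.IsSlice C (Q.graph f) :=
  isSlice_graph_iff.2 fun a => by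
    have := h a
    have := gA_nonneg C' a
    have := gA_le_one C' a
    omega

lemma IsPotential.cutOf_graph (h : Q.IsPotential C C' f) :
    Q.cutOf C (Q.graph f) = C' :=
  gA_injective <| funext fun a => by
    rw [h.isSlice_graph.isPotential_cutOf_graph a, h a]

lemma bijOn_fst_graph (f : Q.V → ℤ) : Set.BijOn Prod.fst (Q.graph f) Set.univ := by
  refine ⟨Set.mapsTo_univ _ _, ?_, fun x _ => ⟨(x, f x), rfl, rfl⟩⟩
  rintro ⟨x, m⟩ (rfl : m = f x) ⟨y, n⟩ (rfl : n = f y) (rfl : x = y)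
  rfl

lemma bijOn_fst_sliceArrows_graph :
    Set.BijOn Prod.fst (Q.sliceArrows C (Q.graph f)) {a | a ∉ Q.cutOf C (Q.graph f)} := by
  refine ⟨fun e he hcut => hcut ⟨e, he, rfl⟩, ?_, fun a ha => not_not.1 ha⟩
  rintro ⟨a, m⟩ ⟨(rfl : m = f (Q.s a)), -⟩ ⟨b, n⟩ ⟨(rfl : n = f (Q.s b)), -⟩ (rfl : a = b)
  rfl

end PreQuiver

theorem stmt_4_general (Q : PreQuiver) (C : Set Q.A)
    (hconn : Q.Connected) :
    (∀ S : Set (Q.V × ℤ), Q.IsSlice C S → Q.Compatible C (Q.cutOf C S)) ∧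
    (∀ (S : Set (Q.V × ℤ)) (ℓ : ℤ), Q.IsSlice C S →
      Q.cutOf C ((fun v : Q.V × ℤ => (v.1, v.2 + ℓ)) '' S) = Q.cutOf C S) ∧
    (∀ C' : Set Q.A, Q.Compatible C C' →
      ∃ S : Set (Q.V × ℤ), Q.IsSlice C S ∧ Q.cutOf C S = C') ∧
    (∀ S S' : Set (Q.V × ℤ), Q.IsSlice C S → Q.IsSlice C S' →
      Q.cutOf C S = Q.cutOf C S' →
      ∃ ℓ : ℤ, S' = (fun v : Q.V × ℤ => (v.1, v.2 + ℓ)) '' S) ∧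
    (∀ S : Set (Q.V × ℤ), Q.IsSlice C S →
      Set.BijOn (fun v : Q.V × ℤ => v.1) S Set.univ ∧
      Set.BijOn (fun e : Q.A × ℤ => e.1) (Q.sliceArrows C S)
        {a : Q.A | a ∉ Q.cutOf C S}) := by
  refine ⟨?_, fun S ℓ _ => PreQuiver.cutOf_image_shift S ℓ, ?_, ?_, ?_⟩
  · intro S hS
    obtain ⟨f, rfl⟩ := hS.exists_eq_graph
    exact hS.isPotential_cutOf_graph.compatible
  · intro C' hC'
    obtain ⟨f, hf⟩ := hC'.exists_isPotential hconn
    exact ⟨Q.graph f, hf.isSlice_graph, hf.cutOf_graph⟩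
  · intro S S' hS hS' hcut
    obtain ⟨f, rfl⟩ := hS.exists_eq_graph
    obtain ⟨f', rfl⟩ := hS'.exists_eq_graph
    obtain ⟨c, hc⟩ := hconn.exists_eq_add_const hS.isPotential_cutOf_graph
      (hcut ▸ hS'.isPotential_cutOf_graph)
    exact ⟨c, by rw [PreQuiver.image_shift_graph, funext hc]⟩
  · intro S hS
    obtain ⟨f, rfl⟩ := hS.exists_eq_graph
    exact ⟨PreQuiver.bijOn_fst_graph f, PreQuiver.bijOn_fst_sliceArrows_graph⟩

/-- cut-slice correspondence: Let `(Q,C)` be a truncated quiver with `Q` connected.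
The assignment `S ↦ C_S := Q₁ \ π(S₁)` induces a bijection from slices of `ℤ(Q,C)` modulo `τ`
to the subsets of `Q₁` compatible with `C`; i.e. `C_S` is compatible with `C` and invariant under
replacing `S` by `τ^ℓ S`, every subset compatible with `C` arises as some `C_S`, and
`C_S = C_{S'}` forces `S' = τ^ℓ S` for some `ℓ ∈ ℤ`.  Moreover `π` induces an isomorphism of
quivers `S → Q_{C_S}`: it is bijective from the vertices of `S` onto `Q₀` and from the arrows of
`S` onto the arrows `Q₁ \ C_S` of `Q_{C_S}` (it commutes with sources and targets by
construction). -/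
theorem stmt_4 (Q : PreQuiver) [Finite Q.V] [Finite Q.A] (C : Set Q.A)
    (hconn : Q.Connected) :
    (∀ S : Set (Q.V × ℤ), Q.IsSlice C S → Q.Compatible C (Q.cutOf C S)) ∧
    (∀ (S : Set (Q.V × ℤ)) (ℓ : ℤ), Q.IsSlice C S →
      Q.cutOf C ((fun v : Q.V × ℤ => (v.1, v.2 + ℓ)) '' S) = Q.cutOf C S) ∧
    (∀ C' : Set Q.A, Q.Compatible C C' →
      ∃ S : Set (Q.V × ℤ), Q.IsSlice C S ∧ Q.cutOf C S = C') ∧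
    (∀ S S' : Set (Q.V × ℤ), Q.IsSlice C S → Q.IsSlice C S' →
      Q.cutOf C S = Q.cutOf C S' →
      ∃ ℓ : ℤ, S' = (fun v : Q.V × ℤ => (v.1, v.2 + ℓ)) '' S) ∧
    (∀ S : Set (Q.V × ℤ), Q.IsSlice C S →
      Set.BijOn (fun v : Q.V × ℤ => v.1) S Set.univ ∧
      Set.BijOn (fun e : Q.A × ℤ => e.1) (Q.sliceArrows C S)
        {a : Q.A | a ∉ Q.cutOf C S}) :=
  stmt_4_general Q C hconn
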